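/- Noiseless vector Kaczmarz descent: let A ∈ ℝ^{1×n} be a nonzero row vector, b ∈ ℝ, and f : ℝⁿ → ℝ be α-strongly convex. Given z̄ ∈ ℝⁿ and x̄ = ∇f*(z̄), define z = z̄ + t·(b − Ax̄)/‖A‖₂²·Aᵀ and x = ∇f*(z). If 0 < t < 2α, then for every h with Ah = b, D_{f,z}(x, h) ≤ D_{f,z̄}(x̄, h) − (t/‖A‖₂²)(1 − t/(2α))·|b − Ax̄|². -/

import Mathlib

open RealInnerProductSpace

/-- The convex (Fenchel) conjugate `f*(z) = sup_x ⟪z,x⟫ - f(x)`. -/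
noncomputable def fconj {n : ℕ} (f : EuclideanSpace ℝ (Fin n) → ℝ)
    (z : EuclideanSpace ℝ (Fin n)) : ℝ :=
  ⨆ x, ⟪z, x⟫ - f x

/-- Bregman distance `D_{f,z}(∇f*(z), h) = f(h) + f*(z) - ⟪z, h⟫`. -/
noncomputable def breg {n : ℕ} (f : EuclideanSpace ℝ (Fin n) → ℝ)
    (z h : EuclideanSpace ℝ (Fin n)) : ℝ :=
  f h + fconj f z - ⟪z, h⟫

/-!
For every `z`, the function `f - ⟪z, ·⟫` is `α`-strongly convex, hence coercive, so it attains
its minimum at some `x₀`, with quadratic growth `α / 2 * ‖y - x₀‖ ^ 2` away from it. Thus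
`f*(z) = ⟪z, x₀⟫ - f x₀`, and Fenchel–Young together with the growth bound give
`0 ≤ f*(w) - f*(z) - ⟪w - z, x₀⟫ ≤ ‖w - z‖ ^ 2 / (2 * α)`. Hence `∇f*(z) = x₀` and `f*` obeys the
descent lemma. Applied to the Kaczmarz step `z - z̄ = c • a`, and using `⟪a, h⟫ = b`, it bounds
the change of the Bregman distance by `c * (⟪a, x̄⟫ - b) + c ^ 2 * ‖a‖ ^ 2 / (2 * α)`, which is
exactly the claimed decrease.
-/

open Set Filter Topology Asymptotics

section StrongConvexity

variable {E : Type*} [NormedAddCommGroup E] [InnerProductSpace ℝ E] {m : ℝ} {f : E → ℝ}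

lemma StrongConvexOn.sub_inner (hf : StrongConvexOn univ m f) (z : E) :
    StrongConvexOn univ m fun x => f x - ⟪z, x⟫ := by
  refine ⟨convex_univ, fun x _ y _ a b ha hb hab => ?_⟩
  have h := hf.2 (mem_univ x) (mem_univ y) ha hb hab
  simp only [smul_eq_mul] at h
  simp only [smul_eq_mul, inner_add_right, real_inner_smul_right]
  linarith

lemma StrongConvexOn.add_mul_sq_norm_sub_le_of_forall_le (hf : StrongConvexOn univ m f)
    {x₀ : E} (hmin : ∀ x, f x₀ ≤ f x) (y : E) :
    f x₀ + m / 2 * ‖y - x₀‖ ^ 2 ≤ f y := by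
  have hseg : ∀ s ∈ Ioo (0 : ℝ) 1, m / 2 * (1 - s) * ‖y - x₀‖ ^ 2 ≤ f y - f x₀ := by
    rintro s ⟨hs0, hs1⟩
    have h := hf.2 (mem_univ y) (mem_univ x₀) hs0.le (sub_nonneg.2 hs1.le) (add_sub_cancel s 1)
    simp only [smul_eq_mul] at h
    have := hmin (s • y + (1 - s) • x₀)
    refine le_of_mul_le_mul_left ?_ hs0
    nlinarith
  have hlim : Tendsto (fun s : ℝ => m / 2 * (1 - s) * ‖y - x₀‖ ^ 2) (𝓝[>] 0)
      (𝓝 (m / 2 * ‖y - x₀‖ ^ 2)) :=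
    tendsto_nhdsWithin_of_tendsto_nhds (Continuous.tendsto' (by fun_prop) _ _ (by simp))
  linarith [le_of_tendsto hlim (eventually_of_mem (Ioo_mem_nhdsGT one_pos) hseg)]

variable [FiniteDimensional ℝ E]

lemma StrongConvexOn.continuous (hf : StrongConvexOn univ m f) : Continuous f := by
  have hq : Continuous fun x => f x - m / 2 * ‖x‖ ^ 2 :=
    continuousOn_univ.1 ((strongConvexOn_iff_convex.1 hf).continuousOn isOpen_univ)
  exact (hq.add (by fun_prop : Continuous fun x : E => m / 2 * ‖x‖ ^ 2)).congr fun x =>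
    sub_add_cancel _ _

lemma ConvexOn.exists_mul_norm_add_le {q : E → ℝ} (hq : ConvexOn ℝ univ q) (hqc : Continuous q) :
    ∃ C D : ℝ, ∀ x : E, 1 ≤ ‖x‖ → C * ‖x‖ + D ≤ q x := by
  obtain ⟨u, -, humin⟩ := (isCompact_closedBall (0 : E) 1).exists_isMinOn
    ⟨0, Metric.mem_closedBall_self zero_le_one⟩ hqc.continuousOn
  refine ⟨q u - q 0, q 0, fun x hx => ?_⟩
  have hr : 0 < ‖x‖ := zero_lt_one.trans_le hx
  have hinv : ‖x‖⁻¹ ≤ 1 := inv_le_one_of_one_le₀ hx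
  have hmem : ‖x‖⁻¹ • x ∈ Metric.closedBall (0 : E) 1 := by
    simp [norm_smul, inv_mul_cancel₀ hr.ne']
  -- `‖x‖⁻¹ • x` is the convex combination of `x` and `0` with weight `‖x‖⁻¹`
  have hcv := hq.2 (mem_univ x) (mem_univ 0) (inv_nonneg.2 hr.le) (sub_nonneg.2 hinv)
    (add_sub_cancel _ 1)
  simp only [smul_zero, add_zero, smul_eq_mul] at hcv
  have h := mul_le_mul_of_nonneg_left ((humin hmem).trans hcv) hr.le
  rw [mul_add, ← mul_assoc, mul_inv_cancel₀ hr.ne', ← mul_assoc, mul_one_sub,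
    mul_inv_cancel₀ hr.ne'] at h
  linarith

lemma StrongConvexOn.tendsto_cocompact (hm : 0 < m) (hf : StrongConvexOn univ m f) :
    Tendsto f (cocompact E) atTop := by
  have hq := strongConvexOn_iff_convex.1 hf
  obtain ⟨C, D, hCD⟩ := hq.exists_mul_norm_add_le
    (hf.continuous.sub (by fun_prop))
  have hquad : Tendsto (fun r : ℝ => m / 2 * r ^ 2 + C * r + D) atTop atTop := by
    have : Tendsto (fun r : ℝ => r * (m / 2 * r + C) + D) atTop atTop :=
      tendsto_atTop_add_const_right _ _ (tendsto_id.atTop_mul_atTop₀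
        (tendsto_atTop_add_const_right _ _ (tendsto_id.const_mul_atTop (by positivity))))
    exact this.congr fun r => by ring
  refine tendsto_atTop_mono' _ ?_ (hquad.comp tendsto_norm_cocompact_atTop)
  filter_upwards [tendsto_norm_cocompact_atTop.eventually (eventually_ge_atTop 1)] with x hx
  have := hCD x hx
  simp only [Function.comp]
  linarith

lemma StrongConvexOn.exists_forall_le (hm : 0 < m) (hf : StrongConvexOn univ m f) :
    ∃ x₀, ∀ x, f x₀ ≤ f x :=
  hf.continuous.exists_forall_le (hf.tendsto_cocompact hm)

end StrongConvexity

lemma hasGradientAt_of_le_of_le_add_mul_sq {E : Type*} [NormedAddCommGroup E]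
    [InnerProductSpace ℝ E] [CompleteSpace E] {g : E → ℝ} {x z : E} (C : ℝ)
    (hlow : ∀ w, g z + ⟪w - z, x⟫ ≤ g w)
    (hup : ∀ w, g w ≤ g z + ⟪w - z, x⟫ + C * ‖w - z‖ ^ 2) : HasGradientAt g x z := by
  rw [hasGradientAt_iff_hasFDerivAt, hasFDerivAt_iff_isLittleO]
  refine IsBigO.trans_isLittleO (IsBigO.of_bound C (Eventually.of_forall fun w => ?_))
    (isLittleO_pow_sub_sub z one_lt_two)
  rw [InnerProductSpace.toDual_apply_apply, real_inner_comm, Real.norm_eq_abs, norm_pow,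
    norm_norm, abs_le]
  constructor <;> linarith [hlow w, hup w]

section Conjugate

variable {n : ℕ} {α : ℝ} {f : EuclideanSpace ℝ (Fin n) → ℝ}

lemma fconj_eq_of_forall_le {z x₀ : EuclideanSpace ℝ (Fin n)}
    (hmin : ∀ y, f x₀ - ⟪z, x₀⟫ ≤ f y - ⟪z, y⟫) : fconj f z = ⟪z, x₀⟫ - f x₀ := by
  have hle : ∀ y, ⟪z, y⟫ - f y ≤ ⟪z, x₀⟫ - f x₀ := fun y => by linarith [hmin y]
  exact le_antisymm (ciSup_le hle)
    (le_ciSup (f := fun y => ⟪z, y⟫ - f y) ⟨_, forall_mem_range.2 hle⟩ x₀)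

lemma inner_sub_le_fconj (hα : 0 < α) (hf : StrongConvexOn univ α f)
    (z x : EuclideanSpace ℝ (Fin n)) : ⟪z, x⟫ - f x ≤ fconj f z := by
  obtain ⟨x₀, hx₀⟩ := (hf.sub_inner z).exists_forall_le hα
  rw [fconj_eq_of_forall_le hx₀]
  linarith [hx₀ x]

lemma fconj_le_of_forall_le (hα : 0 < α) (hf : StrongConvexOn univ α f)
    {z x₀ : EuclideanSpace ℝ (Fin n)} (hmin : ∀ y, f x₀ - ⟪z, x₀⟫ ≤ f y - ⟪z, y⟫)
    (w : EuclideanSpace ℝ (Fin n)) :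
    fconj f w ≤ fconj f z + ⟪w - z, x₀⟫ + ‖w - z‖ ^ 2 / (2 * α) := by
  rw [fconj_eq_of_forall_le hmin]
  refine ciSup_le fun y => ?_
  have hgrowth := (hf.sub_inner z).add_mul_sq_norm_sub_le_of_forall_le hmin y
  have hcs := real_inner_le_norm (w - z) (y - x₀)
  have hamgm : ‖w - z‖ * ‖y - x₀‖ - α / 2 * ‖y - x₀‖ ^ 2 ≤ ‖w - z‖ ^ 2 / (2 * α) := by
    rw [le_div_iff₀ (by positivity)]
    nlinarith [sq_nonneg (‖w - z‖ - α * ‖y - x₀‖)]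
  simp only [inner_sub_left, inner_sub_right] at hcs hgrowth ⊢
  linarith

lemma hasGradientAt_fconj_of_forall_le (hα : 0 < α) (hf : StrongConvexOn univ α f)
    {z x₀ : EuclideanSpace ℝ (Fin n)} (hmin : ∀ y, f x₀ - ⟪z, x₀⟫ ≤ f y - ⟪z, y⟫) :
    HasGradientAt (fconj f) x₀ z := by
  refine hasGradientAt_of_le_of_le_add_mul_sq (2 * α)⁻¹ (fun w => ?_) fun w => ?_
  · rw [fconj_eq_of_forall_le hmin]
    have := inner_sub_le_fconj hα hf w x₀
    rw [inner_sub_left]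
    linarith
  · rw [← div_eq_inv_mul]
    exact fconj_le_of_forall_le hα hf hmin w

lemma fconj_le_add_inner_gradient (hα : 0 < α) (hf : StrongConvexOn univ α f)
    (z w : EuclideanSpace ℝ (Fin n)) :
    fconj f w ≤ fconj f z + ⟪w - z, gradient (fconj f) z⟫ + ‖w - z‖ ^ 2 / (2 * α) := by
  obtain ⟨x₀, hx₀⟩ := (hf.sub_inner z).exists_forall_le hα
  rw [(hasGradientAt_fconj_of_forall_le hα hf hx₀).gradient]
  exact fconj_le_of_forall_le hα hf hx₀ w

end Conjugate

theorem kaczmarz_vector_one_step_descent_general {n : ℕ} (α t : ℝ) (hα : 0 < α)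
    (f : EuclideanSpace ℝ (Fin n) → ℝ)
    (hf : StrongConvexOn Set.univ α f)
    (a : EuclideanSpace ℝ (Fin n)) (ha : a ≠ 0) (b : ℝ)
    (zb xb z : EuclideanSpace ℝ (Fin n))
    (hxb : xb = gradient (fconj f) zb)
    (hz : z = zb + (t * (b - ⟪a, xb⟫) / ‖a‖ ^ 2) • a) :
    ∀ h : EuclideanSpace ℝ (Fin n), ⟪a, h⟫ = b →
      breg f z h ≤ breg f zb h
        - (t / ‖a‖ ^ 2) * (1 - t / (2 * α)) * (b - ⟪a, xb⟫) ^ 2 := by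
  intro h hh
  set c := t * (b - ⟪a, xb⟫) / ‖a‖ ^ 2
  have hstep : z - zb = c • a := by rw [hz, add_sub_cancel_left]
  have hdescent := fconj_le_add_inner_gradient hα hf zb z
  rw [← hxb, hstep, real_inner_smul_left, norm_smul, mul_pow, Real.norm_eq_abs, sq_abs]
    at hdescent
  have hinner : ⟪z, h⟫ = ⟪zb, h⟫ + c * b := by
    rw [hz, inner_add_left, real_inner_smul_left, hh]
  have hgain : c * ⟪a, xb⟫ - c * b + c ^ 2 * ‖a‖ ^ 2 / (2 * α)
      = -((t / ‖a‖ ^ 2) * (1 - t / (2 * α)) * (b - ⟪a, xb⟫) ^ 2) := by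
    have : ‖a‖ ≠ 0 := norm_ne_zero_iff.2 ha
    simp only [c]
    field_simp
    ring
  simp only [breg]
  linarith

theorem kaczmarz_vector_one_step_descent {n : ℕ} (α t : ℝ) (hα : 0 < α)
    (f : EuclideanSpace ℝ (Fin n) → ℝ)
    (hf : StrongConvexOn Set.univ α f)
    (a : EuclideanSpace ℝ (Fin n)) (ha : a ≠ 0) (b : ℝ)
    (ht : 0 < t) (ht2 : t < 2 * α)
    (zb xb z x : EuclideanSpace ℝ (Fin n))
    (hxb : xb = gradient (fconj f) zb)
    (hz : z = zb + (t * (b - ⟪a, xb⟫) / ‖a‖ ^ 2) • a)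
    (hx : x = gradient (fconj f) z) :
    ∀ h : EuclideanSpace ℝ (Fin n), ⟪a, h⟫ = b →
      breg f z h ≤ breg f zb h
        - (t / ‖a‖ ^ 2) * (1 - t / (2 * α)) * (b - ⟪a, xb⟫) ^ 2 :=
  kaczmarz_vector_one_step_descent_general α t hα f hf a ha b zb xb z hxb hz
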